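/- arXiv:1608.04221 — 3 statements merged into one kernel-verified Lean document; each statement's English description precedes it below -/
import Mathlib

section
/- Let n ≥ 2 be a real number, α ∈ (0,1), and define δ := 2(1−α)²/(n+(1−α)²). Let J, t, x, y be real numbers with 0 < J ≤ 1, t > 0, x ≥ 0, and set Q := αJx − y. Assume Q ≥ 0 and 0 ≥ αt·((2−δ)/n)·J·(x−y)² − δ·α·t·J·x² − Q. Then t·Q ≤ n/((2−δ)·α·J). -/
/-!
Put `A := α t ((2 - δ) / n) J`, so the hypothesis reads `A (x - y)² ≤ δ α t J x² + Q`.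
Since `x - y = (1 - αJ) x + Q` with both summands nonnegative and `1 - αJ ≥ 1 - α > 0`,
`(x - y)² ≥ (1 - α)² x² + Q²`; and `δ` is chosen exactly so that `((2 - δ) / n) (1 - α)² = δ`.
The `x²` terms therefore cancel, leaving `A Q² ≤ Q`, i.e. `A Q ≤ 1`, which is the claim.
-/

lemma two_sub_two_mul_div_add {n c : ℝ} (h : n + c ≠ 0) :
    2 - 2 * c / (n + c) = 2 * n / (n + c) := by
  field_simp
  ring

lemma two_sub_two_mul_div_add_div_mul {n c : ℝ} (hn : n ≠ 0) (h : n + c ≠ 0) :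
    (2 - 2 * c / (n + c)) / n * c = 2 * c / (n + c) := by
  rw [two_sub_two_mul_div_add h]
  field_simp

lemma sq_mul_sq_add_sq_le_sq_mul_add {a b x q : ℝ} (ha : 0 ≤ a) (hab : a ≤ b)
    (hx : 0 ≤ x) (hq : 0 ≤ q) :
    a ^ 2 * x ^ 2 + q ^ 2 ≤ (b * x + q) ^ 2 := by
  have hbx : 0 ≤ b * x := mul_nonneg (ha.trans hab) hx
  nlinarith [pow_le_pow_left₀ ha hab 2, mul_nonneg hbx hq]

lemma mul_le_one_of_mul_sq_le {A q : ℝ} (hq : 0 ≤ q) (h : A * q ^ 2 ≤ q) : A * q ≤ 1 := by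
  rcases hq.eq_or_lt with rfl | hq
  · simp
  · exact le_of_mul_le_mul_right (by linarith) hq

/-- The combined maximum-point algebra in the Li–Yau argument.
With `n ≥ 2` real, `α ∈ (0,1)`, `δ := 2(1−α)²/(n+(1−α)²)`, `0 < J ≤ 1`, `t > 0`,
`x ≥ 0`, `Q := αJx − y`, if `Q ≥ 0` and
`0 ≥ αt((2−δ)/n)J(x−y)² − δαtJx² − Q` then `tQ ≤ n/((2−δ)αJ)`. -/
theorem maximum_point_bound (n α : ℝ) (hn : 2 ≤ n) (hα : α ∈ Set.Ioo (0 : ℝ) 1)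
    (δ : ℝ) (hδ : δ = 2 * (1 - α) ^ 2 / (n + (1 - α) ^ 2))
    (J t x y : ℝ) (hJ0 : 0 < J) (hJ1 : J ≤ 1) (ht : 0 < t) (hx : 0 ≤ x)
    (Q : ℝ) (hQ : Q = α * J * x - y) (hQ0 : Q ≥ 0)
    (h : 0 ≥ α * t * ((2 - δ) / n) * J * (x - y) ^ 2 - δ * α * t * J * x ^ 2 - Q) :
    t * Q ≤ n / ((2 - δ) * α * J) := by
  obtain ⟨hα0, hα1⟩ := hα
  have hn0 : 0 < n := by linarith
  have hsum : 0 < n + (1 - α) ^ 2 := by positivity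
  have h2δ : 0 < 2 - δ := by
    rw [hδ, two_sub_two_mul_div_add hsum.ne']
    positivity
  have hδ_eq : (2 - δ) / n * (1 - α) ^ 2 = δ := by
    rw [hδ]
    exact two_sub_two_mul_div_add_div_mul hn0.ne' hsum.ne'
  set A := α * t * ((2 - δ) / n) * J with hA
  have hsq : (1 - α) ^ 2 * x ^ 2 + Q ^ 2 ≤ (x - y) ^ 2 := by
    have hxy : x - y = (1 - α * J) * x + Q := by rw [hQ]; ring
    rw [hxy]
    exact sq_mul_sq_add_sq_le_sq_mul_add (by linarith) (by nlinarith) hx hQ0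
  have hAQ : A * Q ≤ 1 := by
    refine mul_le_one_of_mul_sq_le hQ0 ?_
    have hA0 : 0 ≤ A := by positivity
    have hx2 : A * ((1 - α) ^ 2 * x ^ 2) = δ * α * t * J * x ^ 2 := by
      rw [← hδ_eq, hA]; ring
    linarith [mul_le_mul_of_nonneg_left hsq hA0]
  rw [le_div_iff₀ (by positivity)]
  calc t * Q * ((2 - δ) * α * J) = n * (A * Q) := by rw [hA]; field_simp
    _ ≤ n := mul_le_of_le_one_right hn0.le hAQ
end

section
/- Let n ≥ 1 be a natural number and let u : ℝⁿ × (0,∞) → ℝ be a smooth, everywhere positive solution of the heat equation ∂ₜu = Δu, where Δ is the (analysts') Laplacian in the spatial variable. Let N ≥ 2 and α ∈ (0,1), δ ∈ (0,2) be real numbers, and let j : (0,∞) → (0,1] be a function such that for all (x,t) ∈ ℝⁿ × (0,∞): α·j(t)·|∇u(x,t)|²/u(x,t)² − ∂ₜu(x,t)/u(x,t) ≤ N/((2−δ)·α·j(t)·t). Let 0 < t₁ < t₂ and let K ≥ 1 be a real number with 1/j(t) ≤ K for all t ∈ [t₁,t₂]. Then for all x, y ∈ ℝⁿ: u(x,t₁)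 ≤ u(y,t₂) · (t₂/t₁)^{N·K/((2−δ)·α)} · exp(K·‖x−y‖²/(4·(t₂−t₁)·α)). -/
open InnerProductSpace Set Real

lemma quad_aux (H d c a j : ℝ) : (H * d - c * (a * j) * H ^ 2) * (4 * c * a * j) ≤ d ^ 2 := by
  nlinarith [sq_nonneg (2 * c * a * j * H - d)]

lemma fderiv_split_aux {n : ℕ} (u : EuclideanSpace ℝ (Fin n) × ℝ → ℝ)
    (x₀ : EuclideanSpace ℝ (Fin n)) (t₀ : ℝ)
    (hd : DifferentiableAt ℝ u (x₀, t₀)) (v : EuclideanSpace ℝ (Fin n)) (τ : ℝ) :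
    fderiv ℝ u (x₀, t₀) (v, τ) =
      @inner ℝ _ _ (gradient (fun w => u (w, t₀)) x₀) v + τ * deriv (fun s => u (x₀, s)) t₀ := by
  have hsp : HasFDerivAt (fun w => u (w, t₀))
      ((fderiv ℝ u (x₀, t₀)).comp (ContinuousLinearMap.inl ℝ _ ℝ)) x₀ :=
    hd.hasFDerivAt.comp x₀ (hasFDerivAt_prodMk_left x₀ t₀)
  have hti : HasDerivAt (fun s => u (x₀, s)) (fderiv ℝ u (x₀, t₀) (0, 1)) t₀ :=
    hd.hasFDerivAt.comp_hasDerivAt t₀ ((hasDerivAt_const t₀ x₀).prodMk (hasDerivAt_id t₀))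
  rw [gradient, toDual_symm_apply, hsp.fderiv, hti.deriv]
  have h1 : ((v, τ) : EuclideanSpace ℝ (Fin n) × ℝ) = (v, 0) + (0, τ) := by simp
  have h2 : ((0, τ) : EuclideanSpace ℝ (Fin n) × ℝ) = τ • ((0 : EuclideanSpace ℝ (Fin n)), (1:ℝ)) := by
    simp
  rw [h1, map_add, h2, map_smul]
  simp [ContinuousLinearMap.comp_apply, smul_eq_mul, mul_comm]




/-- The analysts' (spatial) Laplacian of `f : ℝⁿ → ℝ`, i.e. the trace of the Hessian. -/
noncomputable def spatialLaplacian {n : ℕ} (f : EuclideanSpace ℝ (Fin n) → ℝ)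
    (x : EuclideanSpace ℝ (Fin n)) : ℝ :=
  ∑ i : Fin n,
    fderiv ℝ (fun y => fderiv ℝ f y (EuclideanSpace.single i 1)) x (EuclideanSpace.single i 1)

set_option maxHeartbeats 1000000 in
/-- Harnack inequality from the Li–Yau-type gradient estimate. If `u` is a
smooth positive solution of `∂ₜu = Δu` on `ℝⁿ × (0,∞)`, `N ≥ 2`, `α ∈ (0,1)`, `δ ∈ (0,2)`,
`j : (0,∞) → (0,1]` satisfies the gradient estimate
`α j(t) |∇u|²/u² − ∂ₜu/u ≤ N/((2−δ) α j(t) t)` everywhere, `0 < t₁ < t₂` and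
`1/j(t) ≤ K` on `[t₁,t₂]` with `K ≥ 1`, then
`u(x,t₁) ≤ u(y,t₂) (t₂/t₁)^(NK/((2−δ)α)) exp(K‖x−y‖²/(4(t₂−t₁)α))`. -/
theorem harnack_from_gradient_estimate {n : ℕ} (hn : 1 ≤ n)
    (u : EuclideanSpace ℝ (Fin n) × ℝ → ℝ)
    (husmooth : ContDiffOn ℝ (⊤ : ℕ∞) u (Set.univ ×ˢ Set.Ioi (0 : ℝ)))
    (hupos : ∀ (x : EuclideanSpace ℝ (Fin n)) (t : ℝ), 0 < t → 0 < u (x, t))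
    (hheat : ∀ (x : EuclideanSpace ℝ (Fin n)) (t : ℝ), 0 < t →
      deriv (fun s => u (x, s)) t = spatialLaplacian (fun y => u (y, t)) x)
    (N α δ : ℝ) (hN : 2 ≤ N) (hα : α ∈ Set.Ioo (0 : ℝ) 1) (hδ : δ ∈ Set.Ioo (0 : ℝ) 2)
    (j : ℝ → ℝ) (hj : ∀ t : ℝ, 0 < t → 0 < j t ∧ j t ≤ 1)
    (hgrad : ∀ (x : EuclideanSpace ℝ (Fin n)) (t : ℝ), 0 < t →
      α * j t * ‖gradient (fun y => u (y, t)) x‖ ^ 2 / u (x, t) ^ 2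
          - deriv (fun s => u (x, s)) t / u (x, t)
        ≤ N / ((2 - δ) * α * j t * t))
    (t₁ t₂ K : ℝ) (ht₁ : 0 < t₁) (ht₁₂ : t₁ < t₂) (hK : 1 ≤ K)
    (hjK : ∀ t ∈ Set.Icc t₁ t₂, 1 / j t ≤ K) :
    ∀ x y : EuclideanSpace ℝ (Fin n),
      u (x, t₁) ≤ u (y, t₂) * (t₂ / t₁) ^ (N * K / ((2 - δ) * α))
        * Real.exp (K * ‖x - y‖ ^ 2 / (4 * (t₂ - t₁) * α)) := by
  intro x y
  obtain ⟨hα0, hα1⟩ := hα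
  obtain ⟨hδ0, hδ2⟩ := hδ
  have h2δ : 0 < 2 - δ := by linarith
  have ht₂ : 0 < t₂ := ht₁.trans ht₁₂
  have hc : (0:ℝ) < t₂ - t₁ := by linarith
  set c : ℝ := t₂ - t₁ with hcdef
  set d : ℝ := ‖x - y‖ with hddef
  have hd0 : 0 ≤ d := norm_nonneg _
  set C : ℝ := N * K / ((2 - δ) * α) with hCdef
  set B : ℝ := K * d ^ 2 / (4 * c * α) with hBdef
  have hB0 : 0 ≤ B := by positivity
  have hopen : IsOpen ((Set.univ : Set (EuclideanSpace ℝ (Fin n))) ×ˢ Set.Ioi (0:ℝ)) :=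
    isOpen_univ.prod isOpen_Ioi
  have hdiff : ∀ (x₀ : EuclideanSpace ℝ (Fin n)) (t₀ : ℝ), 0 < t₀ →
      DifferentiableAt ℝ u (x₀, t₀) := by
    intro x₀ t₀ ht₀
    exact (husmooth.contDiffAt (hopen.mem_nhds
      (Set.mem_prod.mpr ⟨Set.mem_univ _, Set.mem_Ioi.mpr ht₀⟩))).differentiableAt (by simp)
  set p : ℝ → EuclideanSpace ℝ (Fin n) × ℝ :=
    fun s => (y + s • (x - y), t₂ + s * (t₁ - t₂)) with hpdef
  set F : ℝ → ℝ := fun s =>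
    Real.log (u (p s)) + C * Real.log (t₂ + s * (t₁ - t₂)) - s * B with hFdef
  have hts : ∀ s ∈ Set.Icc (0:ℝ) 1, t₁ ≤ t₂ + s * (t₁ - t₂) ∧ t₂ + s * (t₁ - t₂) ≤ t₂ := by
    intro s ⟨hs0, hs1⟩
    constructor <;> nlinarith
  have htpos : ∀ s ∈ Set.Icc (0:ℝ) 1, 0 < t₂ + s * (t₁ - t₂) := fun s hs =>
    lt_of_lt_of_le ht₁ (hts s hs).1
  -- derivative of F
  have hF : ∀ s ∈ Set.Icc (0:ℝ) 1, HasDerivAt F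
      (fderiv ℝ u (p s) (x - y, t₁ - t₂) / u (p s)
        + C * ((t₁ - t₂) / (t₂ + s * (t₁ - t₂))) - B) s := by
    intro s hs
    have ht0 : 0 < t₂ + s * (t₁ - t₂) := htpos s hs
    have hp1 : HasDerivAt (fun s : ℝ => y + s • (x - y)) (x - y) s := by
      simpa using ((hasDerivAt_id s).smul_const (x - y)).const_add y
    have hp2 : HasDerivAt (fun s : ℝ => t₂ + s * (t₁ - t₂)) (t₁ - t₂) s := by
      simpa using ((hasDerivAt_id s).mul_const (t₁ - t₂)).const_add t₂
    have hp : HasDerivAt p (x - y, t₁ - t₂) s := hp1.prodMk hp2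
    have hu : HasDerivAt (fun s => u (p s)) (fderiv ℝ u (p s) (x - y, t₁ - t₂)) s :=
      (hdiff _ _ ht0).hasFDerivAt.comp_hasDerivAt s hp
    have hune : u (p s) ≠ 0 := (hupos _ _ ht0).ne'
    have hL1 : HasDerivAt (fun s => Real.log (u (p s)))
        (fderiv ℝ u (p s) (x - y, t₁ - t₂) / u (p s)) s := hu.log hune
    have hL2 : HasDerivAt (fun s => C * Real.log (t₂ + s * (t₁ - t₂)))
        (C * ((t₁ - t₂) / (t₂ + s * (t₁ - t₂)))) s := (hp2.log ht0.ne').const_mul C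
    have hL3 : HasDerivAt (fun s : ℝ => s * B) B s := by
      simpa using (hasDerivAt_id s).mul_const B
    exact (hL1.add hL2).sub hL3
  -- the derivative is nonpositive
  have hder_le : ∀ s ∈ Set.Icc (0:ℝ) 1,
      fderiv ℝ u (p s) (x - y, t₁ - t₂) / u (p s)
        + C * ((t₁ - t₂) / (t₂ + s * (t₁ - t₂))) - B ≤ 0 := by
    intro s hs
    set t₀ : ℝ := t₂ + s * (t₁ - t₂) with ht₀def
    have ht0 : 0 < t₀ := htpos s hs
    set x₀ : EuclideanSpace ℝ (Fin n) := y + s • (x - y) with hx₀def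
    have hps : p s = (x₀, t₀) := rfl
    rw [hps, fderiv_split_aux u x₀ t₀ (hdiff _ _ ht0) (x - y) (t₁ - t₂)]
    set G : ℝ := ‖gradient (fun w => u (w, t₀)) x₀‖ with hGdef
    have hG0 : 0 ≤ G := norm_nonneg _
    set w : ℝ := u (x₀, t₀) with hwdef
    have hw : 0 < w := hupos _ _ ht0
    set Du : ℝ := deriv (fun r => u (x₀, r)) t₀ with hDudef
    have hinner : @inner ℝ _ _ (gradient (fun w => u (w, t₀)) x₀) (x - y) ≤ G * d :=
      real_inner_le_norm _ _
    have hjt : 0 < j t₀ := (hj t₀ ht0).1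
    have hjK' : 1 / j t₀ ≤ K := hjK t₀ ⟨(hts s hs).1, (hts s hs).2⟩
    have hgr := hgrad x₀ t₀ ht0
    rw [← hGdef, ← hwdef, ← hDudef] at hgr
    set H : ℝ := G / w with hHdef
    have hH0 : 0 ≤ H := by positivity
    have heq : α * j t₀ * G ^ 2 / w ^ 2 = α * j t₀ * H ^ 2 := by
      rw [hHdef, div_pow]; ring
    have hgr' : -(Du / w) ≤ N / ((2 - δ) * α * j t₀ * t₀) - α * j t₀ * H ^ 2 := by
      rw [← heq]; linarith
    have hkey : H * d - c * (α * j t₀) * H ^ 2 ≤ d ^ 2 / (4 * c * α * j t₀) := by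
      rw [le_div_iff₀ (by positivity)]
      exact quad_aux H d c α (j t₀)
    have hB1 : d ^ 2 / (4 * c * α * j t₀) ≤ B := by
      have h1 : d ^ 2 / (4 * c * α * j t₀) = d ^ 2 / (4 * c * α) * (1 / j t₀) := by
        field_simp
      rw [h1, hBdef]
      calc d ^ 2 / (4 * c * α) * (1 / j t₀) ≤ d ^ 2 / (4 * c * α) * K :=
            mul_le_mul_of_nonneg_left hjK' (by positivity)
        _ = K * d ^ 2 / (4 * c * α) := by ring
    have hC1 : c * (N / ((2 - δ) * α * j t₀ * t₀)) ≤ C * (c / t₀) := by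
      have h1 : c * (N / ((2 - δ) * α * j t₀ * t₀)) = N * c / ((2 - δ) * α * t₀) * (1 / j t₀) := by
        field_simp
      have h2 : C * (c / t₀) = N * c / ((2 - δ) * α * t₀) * K := by
        rw [hCdef]; field_simp
      rw [h1, h2]
      exact mul_le_mul_of_nonneg_left hjK' (by positivity)
    have h3 : @inner ℝ _ _ (gradient (fun w => u (w, t₀)) x₀) (x - y) / w ≤ H * d := by
      rw [hHdef, div_mul_eq_mul_div]
      gcongr
    have h4 : (t₁ - t₂) * Du / w = c * (-(Du / w)) := by rw [hcdef]; ring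
    have hgrc : c * (-(Du / w)) ≤ c * (N / ((2 - δ) * α * j t₀ * t₀)) - c * (α * j t₀) * H ^ 2 := by
      have := mul_le_mul_of_nonneg_left hgr' hc.le
      rw [mul_sub] at this
      linarith
    have h5 : C * ((t₁ - t₂) / t₀) = -(C * (c / t₀)) := by rw [hcdef]; ring
    rw [add_div, h5]
    linarith
  -- F is antitone on [0,1]
  have hcont : ContinuousOn F (Set.Icc 0 1) := fun s hs =>
    ((hF s hs).continuousAt).continuousWithinAt
  have hdiffF : DifferentiableOn ℝ F (interior (Set.Icc (0:ℝ) 1)) := by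
    intro s hs
    rw [interior_Icc] at hs
    exact ((hF s (Ioo_subset_Icc_self hs)).differentiableAt).differentiableWithinAt
  have hderiv0 : ∀ s ∈ interior (Set.Icc (0:ℝ) 1), deriv F s ≤ 0 := by
    intro s hs
    rw [interior_Icc] at hs
    rw [(hF s (Ioo_subset_Icc_self hs)).deriv]
    exact hder_le s (Ioo_subset_Icc_self hs)
  have hanti := antitoneOn_of_deriv_nonpos (convex_Icc 0 1) hcont hdiffF hderiv0
  have hF10 : F 1 ≤ F 0 := hanti ⟨le_refl 0, zero_le_one⟩ ⟨zero_le_one, le_refl 1⟩ zero_le_one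
  have hp1' : p 1 = (x, t₁) := by
    simp only [hpdef, one_smul, one_mul, Prod.mk.injEq]
    constructor
    · abel
    · ring
  have hp0' : p 0 = (y, t₂) := by
    simp [hpdef]
  have hF1 : F 1 = Real.log (u (x, t₁)) + C * Real.log t₁ - B := by
    simp only [hFdef, hp1', one_mul, one_smul]
    have : t₂ + (t₁ - t₂) = t₁ := by ring
    rw [this]
  have hF0 : F 0 = Real.log (u (y, t₂)) + C * Real.log t₂ := by
    simp [hFdef, hp0']
  rw [hF1, hF0] at hF10
  calc u (x, t₁) = Real.exp (Real.log (u (x, t₁))) := (Real.exp_log (hupos _ _ ht₁)).symm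
    _ ≤ Real.exp (Real.log (u (y, t₂)) + Real.log (t₂ / t₁) * C + B) := by
        rw [Real.exp_le_exp, Real.log_div ht₂.ne' ht₁.ne']
        linarith [hF10,
          (by ring : (Real.log t₂ - Real.log t₁) * C = C * Real.log t₂ - C * Real.log t₁)]
    _ = u (y, t₂) * (t₂ / t₁) ^ C * Real.exp B := by
        rw [Real.exp_add, Real.exp_add, Real.exp_log (hupos _ _ ht₂),
          Real.rpow_def_of_pos (div_pos ht₂ ht₁)]
end

section
/- Let (X,d) be a metric space equipped with a measure μ with 0 < μ(X) < ∞, and suppose d(x,y) ≤ D for all x,y ∈ X. Let β > 0, γ > 0, ν > 0, α ∈ (0,1), fix x ∈ X, and let p : (0,β] × X → (0,∞) be a function, measurable in the second variable, such that ∫_X p(t,y) dμ(y) = 1 for all t ∈ (0,β], and such that for all y ∈ X and all t, s > 0 with t + s ≤ β: p(t,x) ≤ p(t+s,y) · ((t+s)/t)^γ · exp(ν·d(x,y)²/(4·s·α)). Then for all t ∈ (0, β/2]: μ(X) · p(t,x) ≤ (β/t)^γ · exp(ν·D²/(2·(β−t)·α)) ≤ (β/t)^γ · exp(ν·D²/(α·β)).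 -/
open MeasureTheory

/-!
Fix `t ≤ β / 2` and take `s = (β - t) / 2` in the Harnack inequality, so that `4 s α = 2 (β - t) α`.
Bounding `(t + s) / t ≤ β / t` and `d(x, y) ≤ D` turns it into `p(t, x) ≤ C · p(t + s, y)` with a
constant `C` independent of `y`. Integrating in `y` over `X`, the left side gives `μ(X) p(t, x)` and
the right side gives `C`, by stochastic completeness at time `t + s`. Finally `t ≤ β / 2` means
`2 (β - t) ≥ β`, which gives the second, cruder bound.
-/

lemma measureReal_univ_mul_le_mul_integral {X : Type*} [MeasurableSpace X] {μ : Measure X}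
    [IsFiniteMeasure μ] {f : X → ℝ} (hf : Integrable f μ) {c C : ℝ} (h : ∀ y, c ≤ C * f y) :
    μ.real Set.univ * c ≤ C * ∫ y, f y ∂μ :=
  calc μ.real Set.univ * c = ∫ _, c ∂μ := by rw [integral_const, smul_eq_mul]
    _ ≤ ∫ y, C * f y ∂μ := integral_mono (integrable_const c) (hf.const_mul C) h
    _ = C * ∫ y, f y ∂μ := integral_const_mul C f

theorem on_diagonal_bound_from_harnack_general {X : Type*} [MetricSpace X] [MeasurableSpace X]
    (μ : Measure X) (hμfin : μ Set.univ < ⊤)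
    (D β γ ν α : ℝ) (hD : ∀ x y : X, dist x y ≤ D)
    (hβ : 0 < β) (hγ : 0 < γ) (hν : 0 < ν) (hα : α ∈ Set.Ioo (0 : ℝ) 1)
    (x : X) (p : ℝ → X → ℝ)
    (hppos : ∀ t ∈ Set.Ioc (0 : ℝ) β, ∀ y : X, 0 < p t y)
    (hpint : ∀ t ∈ Set.Ioc (0 : ℝ) β, ∫ y, p t y ∂μ = 1)
    (hharnack : ∀ (y : X) (t s : ℝ), 0 < t → 0 < s → t + s ≤ β →
      p t x ≤ p (t + s) y * ((t + s) / t) ^ γ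
        * Real.exp (ν * dist x y ^ 2 / (4 * s * α))) :
    ∀ t ∈ Set.Ioc (0 : ℝ) (β / 2),
      (μ Set.univ).toReal * p t x
          ≤ (β / t) ^ γ * Real.exp (ν * D ^ 2 / (2 * (β - t) * α)) ∧
        (β / t) ^ γ * Real.exp (ν * D ^ 2 / (2 * (β - t) * α))
          ≤ (β / t) ^ γ * Real.exp (ν * D ^ 2 / (α * β)) := by
  rintro t ⟨ht0, ht⟩
  obtain ⟨hα0, -⟩ := hα
  set s := (β - t) / 2 with hs_def
  have hs : 0 < s := by linarith
  have hts : t + s ∈ Set.Ioc 0 β := ⟨by linarith, by linarith⟩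
  have hsα : 4 * s * α = 2 * (β - t) * α := by ring
  have hpointwise (y : X) :
      p t x ≤ (β / t) ^ γ * Real.exp (ν * D ^ 2 / (2 * (β - t) * α)) * p (t + s) y := by
    have hp := (hppos _ hts y).le
    have hdist : dist x y ^ 2 ≤ D ^ 2 := pow_le_pow_left₀ dist_nonneg (hD x y) 2
    calc p t x ≤ p (t + s) y * ((t + s) / t) ^ γ * Real.exp (ν * dist x y ^ 2 / (4 * s * α)) :=
          hharnack y t s ht0 hs hts.2
      _ ≤ p (t + s) y * (β / t) ^ γ * Real.exp (ν * D ^ 2 / (4 * s * α)) := by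
          gcongr
          exact hts.2
      _ = _ := by rw [hsα]; ring
  have : IsFiniteMeasure μ := ⟨hμfin⟩
  have hint : Integrable (p (t + s)) μ := .of_integral_ne_zero (by simp [hpint _ hts])
  refine ⟨?_, ?_⟩
  · simpa [measureReal_def, hpint _ hts] using measureReal_univ_mul_le_mul_integral hint hpointwise
  · have hβt : α * β ≤ 2 * (β - t) * α := by nlinarith
    gcongr

/-- On-diagonal heat kernel bound from the Harnack inequality. Let `(X,d)`
be a metric space with a measure `μ`, `0 < μ(X) < ∞`, `d(x,y) ≤ D` for all `x,y`,
`β, γ, ν > 0`, `α ∈ (0,1)`, `x ∈ X` fixed, and `p : (0,β] × X → (0,∞)` measurable in the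
second variable with `∫_X p(t,y) dμ(y) = 1` for `t ∈ (0,β]` and satisfying the Harnack
bound `p(t,x) ≤ p(t+s,y)((t+s)/t)^γ exp(ν d(x,y)²/(4sα))` whenever `t,s > 0`, `t+s ≤ β`.
Then for all `t ∈ (0,β/2]`:
`μ(X)·p(t,x) ≤ (β/t)^γ exp(ν D²/(2(β−t)α)) ≤ (β/t)^γ exp(ν D²/(αβ))`. -/
theorem on_diagonal_bound_from_harnack {X : Type*} [MetricSpace X] [MeasurableSpace X]
    (μ : Measure X) (hμ0 : 0 < μ Set.univ) (hμfin : μ Set.univ < ⊤)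
    (D β γ ν α : ℝ) (hD : ∀ x y : X, dist x y ≤ D)
    (hβ : 0 < β) (hγ : 0 < γ) (hν : 0 < ν) (hα : α ∈ Set.Ioo (0 : ℝ) 1)
    (x : X) (p : ℝ → X → ℝ)
    (hpmeas : ∀ t ∈ Set.Ioc (0 : ℝ) β, Measurable (p t))
    (hppos : ∀ t ∈ Set.Ioc (0 : ℝ) β, ∀ y : X, 0 < p t y)
    (hpint : ∀ t ∈ Set.Ioc (0 : ℝ) β, ∫ y, p t y ∂μ = 1)
    (hharnack : ∀ (y : X) (t s : ℝ), 0 < t → 0 < s → t + s ≤ β →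
      p t x ≤ p (t + s) y * ((t + s) / t) ^ γ
        * Real.exp (ν * dist x y ^ 2 / (4 * s * α))) :
    ∀ t ∈ Set.Ioc (0 : ℝ) (β / 2),
      (μ Set.univ).toReal * p t x
          ≤ (β / t) ^ γ * Real.exp (ν * D ^ 2 / (2 * (β - t) * α)) ∧
        (β / t) ^ γ * Real.exp (ν * D ^ 2 / (2 * (β - t) * α))
          ≤ (β / t) ^ γ * Real.exp (ν * D ^ 2 / (α * β)) :=
  on_diagonal_bound_from_harnack_general μ hμfin D β γ ν α hD hβ hγ hν hα x p hppos hpint hharnack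
end
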